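/- arXiv:1912.02683 — 3 statements merged into one kernel-verified Lean document; each statement's English description precedes it below -/
import Mathlib

section
/- Let G₁ and G₂ be connected graphs and let G₁ ∗ G₂ be a tree amalgamation with nonempty adhesion sets and of finite identification. Then the canonical map π : V(G₁+G₂) → V(G₁∗G₂), which sends each vertex of G₁+G₂ to the vertex of G₁∗G₂ obtained from it after contracting all added edges, is a quasi-isometry with respect to the path metrics of G₁+G₂ and G₁∗G₂. -/
noncomputable section

/-- A family of subsets is *uniformly bounded* with respect to the distance `d` if there is a
common bound on the diameters of its members. -/
def UnifBdd {X : Type*} (d : X → X → ℝ) (𝒱 : Set (Set X)) : Prop :=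
  ∃ D : ℝ, ∀ V ∈ 𝒱, ∀ x ∈ V, ∀ y ∈ V, d x y ≤ D

/-- A family of subsets is a *cover* of `X`. -/
def IsCover {X : Type*} (𝒱 : Set (Set X)) : Prop :=
  ∀ x : X, ∃ V ∈ 𝒱, x ∈ V

/-- A set is *open* with respect to the distance `d` (for a metric space with `d = dist` this is
ordinary openness). -/
def DOpen {X : Type*} (d : X → X → ℝ) (U : Set X) : Prop :=
  ∀ x ∈ U, ∃ ε > (0 : ℝ), ∀ y, d x y < ε → y ∈ U

/-- A family of subsets has *multiplicity at most `m`*: no point belongs to more than `m` of its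
members. -/
def MultLE {X : Type*} (𝒱 : Set (Set X)) (m : ℕ) : Prop :=
  ∀ x : X, ∀ F : Finset (Set X), (∀ V ∈ F, V ∈ 𝒱 ∧ x ∈ V) → F.card ≤ m

/-- `𝒰` *refines* `𝒱` if every member of `𝒰` is contained in some member of `𝒱`. -/
def Refines {X : Type*} (𝒰 𝒱 : Set (Set X)) : Prop :=
  ∀ U ∈ 𝒰, ∃ V ∈ 𝒱, U ⊆ V

/-- A family of subsets is *`r`-disjoint*: distinct members are at distance at least `r`. -/
def RDisjoint {X : Type*} (d : X → X → ℝ) (r : ℝ) (𝒱 : Set (Set X)) : Prop :=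
  ∀ V ∈ 𝒱, ∀ W ∈ 𝒱, V ≠ W → ∀ x ∈ V, ∀ y ∈ W, r ≤ d x y

/-- `X` (with distance `d`) has *asymptotic dimension at most `n`*: every uniformly bounded open
cover is refined by ... i.e. for every uniformly bounded open cover `𝒱` there is a uniformly
bounded open cover `𝒰` of multiplicity at most `n + 1` which `𝒱` refines. -/
def AsdimLE {X : Type*} (d : X → X → ℝ) (n : ℕ) : Prop :=
  ∀ 𝒱 : Set (Set X), IsCover 𝒱 → UnifBdd d 𝒱 → (∀ V ∈ 𝒱, DOpen d V) →
    ∃ 𝒰 : Set (Set X), IsCover 𝒰 ∧ UnifBdd d 𝒰 ∧ (∀ U ∈ 𝒰, DOpen d U) ∧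
      MultLE 𝒰 (n + 1) ∧ Refines 𝒱 𝒰

/-- The *asymptotic dimension* of `X` with distance `d`, as an extended natural number:
the least `n` with `AsdimLE d n`, and `⊤` if there is no such `n`. -/
def asdim {X : Type*} (d : X → X → ℝ) : ℕ∞ :=
  sInf {k : ℕ∞ | ∃ m : ℕ, k = (m : ℕ∞) ∧ AsdimLE d m}
/-- The path metric (graph distance) of a graph, as a real-valued distance function on the
vertex set. -/
def graphDist {V : Type*} (G : SimpleGraph V) : V → V → ℝ :=
  fun x y => (G.dist x y : ℝ)

/-- A graph is locally finite if every vertex has finite degree. -/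
def LocFinite {V : Type*} (G : SimpleGraph V) : Prop :=
  ∀ v : V, (G.neighborSet v).Finite

/-- A group action on a graph via a homomorphism-like map `ρ` into permutations of the vertex
set: every `ρ γ` is an automorphism of the graph. -/
def IsGraphAction {V Γ : Type*} (G : SimpleGraph V) (ρ : Γ → Equiv.Perm V) : Prop :=
  ∀ (γ : Γ) (x y : V), G.Adj (ρ γ x) (ρ γ y) ↔ G.Adj x y

/-- The action given by `ρ` is quasi-transitive: it has finitely many orbits on the vertex set. -/
def QuasiTransitiveAction {V Γ : Type*} (ρ : Γ → Equiv.Perm V) : Prop :=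
  ∃ F : Finset V, ∀ x : V, ∃ y ∈ F, ∃ γ : Γ, ρ γ y = x
/-- The data of a tree amalgamation of two graphs `G₁` and `G₂`: disjoint index sets `I₁`, `I₂`
(realised as two different types), families of adhesion sets `S₁`, `S₂`, bonding bijections
`bond k ℓ : S₁ k → S₂ ℓ` (the map `φ_{ℓk}` being its inverse), an `(|I₁|,|I₂|)`-semiregular
connecting tree `T` with canonical bipartition given by `side`, and a labelling of the directed
edges of `T` such that each label at a vertex occurs exactly once (encoded by the equivalences
`lab₁`, `lab₂` between the neighbourhood of a vertex and the corresponding index set; this also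
encodes the semiregularity of `T`). -/
structure TreeAmalg {V₁ V₂ : Type} (G₁ : SimpleGraph V₁) (G₂ : SimpleGraph V₂) where
  I₁ : Type
  I₂ : Type
  S₁ : I₁ → Set V₁
  S₂ : I₂ → Set V₂
  bond : I₁ → I₂ → V₁ → V₂
  bondBij : ∀ k ℓ, Set.BijOn (bond k ℓ) (S₁ k) (S₂ ℓ)
  VT : Type
  T : SimpleGraph VT
  treeT : T.IsTree
  side : VT → Bool
  bipart : ∀ ⦃u v : VT⦄, T.Adj u v → side u ≠ side v
  lab₁ : ∀ u : VT, side u = true → (T.neighborSet u ≃ I₁)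
  lab₂ : ∀ u : VT, side u = false → (T.neighborSet u ≃ I₂)

namespace TreeAmalg

variable {V₁ V₂ : Type} {G₁ : SimpleGraph V₁} {G₂ : SimpleGraph V₂}

/-- The vertex set of the graph `G₁ + G₂`: the disjoint union of a copy of `G₁` for every node
of `T` on side `1` and a copy of `G₂` for every node of `T` on side `2`. -/
abbrev PlusV (A : TreeAmalg G₁ G₂) : Type :=
  ({u : A.VT // A.side u = true} × V₁) ⊕ ({u : A.VT // A.side u = false} × V₂)

/-- The node of the connecting tree to whose copy a vertex of `G₁ + G₂` belongs. -/
def nodeOf (A : TreeAmalg G₁ G₂) : A.PlusV → A.VT :=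
  Sum.elim (fun p => p.1.1) (fun p => p.1.1)

/-- Edges within the copies of `G₁` and `G₂`. -/
def copyRel (A : TreeAmalg G₁ G₂) : A.PlusV → A.PlusV → Prop :=
  fun p q =>
    match p, q with
    | Sum.inl (u, x), Sum.inl (u', x') => u = u' ∧ G₁.Adj x x'
    | Sum.inr (v, y), Sum.inr (v', y') => v = v' ∧ G₂.Adj y y'
    | _, _ => False

/-- The new edges added between the copies: for a directed edge `uv` of `T` with labels
`k = f(uv)` and `ℓ = f(vu)`, an edge between each `x ∈ S^u_k` and `φ_{kℓ}(x) ∈ S^v_ℓ`. -/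
def crossRel (A : TreeAmalg G₁ G₂) : A.PlusV → A.PlusV → Prop :=
  fun p q =>
    match p, q with
    | Sum.inl (u, x), Sum.inr (v, y) =>
        ∃ h : A.T.Adj u.1 v.1,
          x ∈ A.S₁ (A.lab₁ u.1 u.2 ⟨v.1, h⟩) ∧
          y = A.bond (A.lab₁ u.1 u.2 ⟨v.1, h⟩) (A.lab₂ v.1 v.2 ⟨u.1, h.symm⟩) x
    | _, _ => False

/-- The graph `G₁ + G₂`. -/
def Plus (A : TreeAmalg G₁ G₂) : SimpleGraph A.PlusV :=
  SimpleGraph.fromRel (fun p q => A.copyRel p q ∨ A.crossRel p q)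

/-- The vertex set of the tree amalgamation `G₁ ∗ G₂`: obtained from `G₁ + G₂` by contracting
all the added (cross) edges, i.e. the quotient by the equivalence relation generated by the
cross edges. -/
def StarV (A : TreeAmalg G₁ G₂) : Type :=
  Quotient (Relation.EqvGen.setoid A.crossRel)

/-- The canonical map `π : V(G₁ + G₂) → V(G₁ ∗ G₂)`. -/
def proj (A : TreeAmalg G₁ G₂) : A.PlusV → A.StarV :=
  Quotient.mk (Relation.EqvGen.setoid A.crossRel)

/-- The tree amalgamation `G₁ ∗ G₂`: the graph obtained from `G₁ + G₂` by contracting all the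
cross edges. -/
def Star (A : TreeAmalg G₁ G₂) : SimpleGraph A.StarV :=
  SimpleGraph.fromRel (fun a b => ∃ p q : A.PlusV, A.proj p = a ∧ A.proj q = b ∧ A.Plus.Adj p q)

/-- The adhesion set of `G₁ ∗ G₂` coming from the copy of `S¹_k` in the copy of `G₁`
at the node `u` of `T`. -/
def adhesion₁ (A : TreeAmalg G₁ G₂) (u : {u : A.VT // A.side u = true}) (k : A.I₁) :
    Set A.StarV :=
  A.proj '' {p : A.PlusV | ∃ x ∈ A.S₁ k, p = Sum.inl (u, x)}

/-- The adhesion set of `G₁ ∗ G₂` coming from the copy of `S²_ℓ` in the copy of `G₂`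
at the node `v` of `T`. -/
def adhesion₂ (A : TreeAmalg G₁ G₂) (v : {v : A.VT // A.side v = false}) (ℓ : A.I₂) :
    Set A.StarV :=
  A.proj '' {p : A.PlusV | ∃ y ∈ A.S₂ ℓ, p = Sum.inr (v, y)}

/-- `C` is an adhesion set of the tree amalgamation `G₁ ∗ G₂`. -/
def IsAdhesionSet (A : TreeAmalg G₁ G₂) (C : Set A.StarV) : Prop :=
  (∃ u k, C = A.adhesion₁ u k) ∨ (∃ v ℓ, C = A.adhesion₂ v ℓ)

/-- All adhesion sets of the tree amalgamation are nonempty. -/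
def NonemptyAdhesions (A : TreeAmalg G₁ G₂) : Prop :=
  (∀ k, (A.S₁ k).Nonempty) ∧ (∀ ℓ, (A.S₂ ℓ).Nonempty)

/-- The tree amalgamation has finite adhesion: all adhesion sets are finite. -/
def FiniteAdhesion (A : TreeAmalg G₁ G₂) : Prop :=
  (∀ k, (A.S₁ k).Finite) ∧ (∀ ℓ, (A.S₂ ℓ).Finite)

/-- The tree amalgamation has finite identification: the identification sizes of all vertices of
`G₁ ∗ G₂` (the number of nodes of `T` whose copies contain a vertex mapping to the given vertex
under `π`) are bounded. -/
def FiniteIdentification (A : TreeAmalg G₁ G₂) : Prop :=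
  ∃ N : ℕ, ∀ a : A.StarV,
    {u : A.VT | ∃ p : A.PlusV, A.proj p = a ∧ A.nodeOf p = u}.Finite ∧
    {u : A.VT | ∃ p : A.PlusV, A.proj p = a ∧ A.nodeOf p = u}.ncard ≤ N

/-- The tree amalgamation is trivial: for some node `v` of `T` the restriction of `π` to the
copy of the corresponding graph at `v` is a bijection onto `V(G₁ ∗ G₂)`. -/
def IsTrivial (A : TreeAmalg G₁ G₂) : Prop :=
  ∃ v : A.VT, Set.BijOn A.proj {p : A.PlusV | A.nodeOf p = v} Set.univ

section Actions

variable {Γ₁ Γ₂ : Type} [Group Γ₁] [Group Γ₂]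

/-- The tree amalgamation respects `Γ₁` (acting on `G₁` via `ρ₁`): for every `γ ∈ Γ₁` there is a
permutation `σ` of `I₁` such that for every `k ∈ I₁` there are `ℓ ∈ I₂` and `τ` in the setwise
stabiliser of `S₂ ℓ` in `Γ₂` with `φ_{kℓ} = τ ∘ φ_{σ(k)ℓ} ∘ γ|_{S₁ k}`. -/
def Respects₁ (A : TreeAmalg G₁ G₂) (ρ₁ : Γ₁ → Equiv.Perm V₁) (ρ₂ : Γ₂ → Equiv.Perm V₂) :
    Prop :=
  ∀ γ : Γ₁, ∃ σ : Equiv.Perm A.I₁, ∀ k : A.I₁, ∃ ℓ : A.I₂, ∃ τ : Γ₂,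
    (fun z => ρ₂ τ z) '' A.S₂ ℓ = A.S₂ ℓ ∧
    ∀ x ∈ A.S₁ k, ρ₁ γ x ∈ A.S₁ (σ k) ∧ A.bond k ℓ x = ρ₂ τ (A.bond (σ k) ℓ (ρ₁ γ x))

/-- The tree amalgamation respects `Γ₂` (acting on `G₂` via `ρ₂`); here the bonding maps
`φ_{ℓk} : S₂ ℓ → S₁ k` are the inverses of the maps `bond k ℓ`, so the condition
`φ_{ℓk} = τ ∘ φ_{σ(ℓ)k} ∘ γ|_{S₂ ℓ}` is expressed via `bond`. -/
def Respects₂ (A : TreeAmalg G₁ G₂) (ρ₁ : Γ₁ → Equiv.Perm V₁) (ρ₂ : Γ₂ → Equiv.Perm V₂) :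
    Prop :=
  ∀ γ : Γ₂, ∃ σ : Equiv.Perm A.I₂, ∀ ℓ : A.I₂, ∃ k : A.I₁, ∃ τ : Γ₁,
    (fun z => ρ₁ τ z) '' A.S₁ k = A.S₁ k ∧
    (∀ y ∈ A.S₂ ℓ, ρ₂ γ y ∈ A.S₂ (σ ℓ)) ∧
    ∀ x ∈ A.S₁ k, ∀ x' ∈ A.S₁ k,
      A.bond k (σ ℓ) x' = ρ₂ γ (A.bond k ℓ x) → x = ρ₁ τ x'

/-- The bonding maps from `I₁` to `I₂` are consistent. -/
def Cons₁₂ (A : TreeAmalg G₁ G₂) (ρ₂ : Γ₂ → Equiv.Perm V₂) : Prop :=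
  ∀ k : A.I₁, ∀ ℓ ℓ' : A.I₂, ∃ γ : Γ₂, ∀ x ∈ A.S₁ k, A.bond k ℓ x = ρ₂ γ (A.bond k ℓ' x)

/-- The bonding maps from `I₂` to `I₁` are consistent (expressed via `bond`, whose inverses are
the bonding maps `φ_{ℓk}`). -/
def Cons₂₁ (A : TreeAmalg G₁ G₂) (ρ₁ : Γ₁ → Equiv.Perm V₁) : Prop :=
  ∀ ℓ : A.I₂, ∀ k k' : A.I₁, ∃ γ : Γ₁, ∀ x ∈ A.S₁ k, ∀ x' ∈ A.S₁ k',
    A.bond k' ℓ x' = A.bond k ℓ x → x = ρ₁ γ x'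

/-- The tree amalgamation is of Type 1 respecting the actions of `Γ₁` and `Γ₂`. -/
def Type1 (A : TreeAmalg G₁ G₂) (ρ₁ : Γ₁ → Equiv.Perm V₁) (ρ₂ : Γ₂ → Equiv.Perm V₂) : Prop :=
  A.Respects₁ ρ₁ ρ₂ ∧ A.Respects₂ ρ₁ ρ₂ ∧ A.Cons₁₂ ρ₂ ∧ A.Cons₂₁ ρ₁

/-- The tree amalgamation is of Type 2 respecting the actions: `G₁ = G₂`, `Γ₁ = Γ₂` and
`I₁ = I₂` (witnessed by identifications `eV`, `eΓ`, `eI` compatible with the actions and the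
adhesion sets), there is `J ⊆ I` such that for every edge of `T` the label of one orientation
lies in `J` iff the label of the other does not, the tree amalgamation respects `Γ`, and the
bonding maps between `J` and `I ∖ J` are consistent. -/
def Type2 (A : TreeAmalg G₁ G₂) (ρ₁ : Γ₁ → Equiv.Perm V₁) (ρ₂ : Γ₂ → Equiv.Perm V₂) : Prop :=
  ∃ (eV : G₁ ≃g G₂) (eΓ : Γ₁ ≃* Γ₂) (eI : A.I₁ ≃ A.I₂),
    (∀ (γ : Γ₁) (x : V₁), eV (ρ₁ γ x) = ρ₂ (eΓ γ) (eV x)) ∧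
    (∀ k : A.I₁, A.S₂ (eI k) = (fun x => eV x) '' A.S₁ k) ∧
    A.Respects₁ ρ₁ ρ₂ ∧ A.Respects₂ ρ₁ ρ₂ ∧
    ∃ J : Set A.I₁,
      (∀ (u v : A.VT) (h : A.T.Adj u v) (hu : A.side u = true) (hv : A.side v = false),
        A.lab₁ u hu ⟨v, h⟩ ∈ J ↔ eI.symm (A.lab₂ v hv ⟨u, h.symm⟩) ∉ J) ∧
      (∀ k ∈ J, ∀ ℓ ℓ' : A.I₂, eI.symm ℓ ∉ J → eI.symm ℓ' ∉ J →
        ∃ γ : Γ₂, ∀ x ∈ A.S₁ k, A.bond k ℓ x = ρ₂ γ (A.bond k ℓ' x)) ∧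
      (∀ ℓ : A.I₂, eI.symm ℓ ∉ J → ∀ k ∈ J, ∀ k' ∈ J,
        ∃ γ : Γ₁, ∀ x ∈ A.S₁ k, ∀ x' ∈ A.S₁ k',
          A.bond k' ℓ x' = A.bond k ℓ x → x = ρ₁ γ x')

/-- The tree amalgamation respects the actions of `Γ₁` and `Γ₂` (given via `ρ₁`, `ρ₂`):
it is of Type 1 or of Type 2. -/
def RespectsActions (A : TreeAmalg G₁ G₂) (ρ₁ : Γ₁ → Equiv.Perm V₁)
    (ρ₂ : Γ₂ → Equiv.Perm V₂) : Prop :=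
  A.Type1 ρ₁ ρ₂ ∨ A.Type2 ρ₁ ρ₂

end Actions

end TreeAmalg
/-- `f` is a quasi-isometry from `(X, dX)` to `(Y, dY)`: there are constants `γ ≥ 1` and `c ≥ 0`
with `γ⁻¹ · dX x y − c ≤ dY (f x) (f y) ≤ γ · dX x y + c` for all `x, y`. -/
def IsQuasiIsometryD {X Y : Type*} (dX : X → X → ℝ) (dY : Y → Y → ℝ) (f : X → Y) : Prop :=
  ∃ γ : ℝ, 1 ≤ γ ∧ ∃ c : ℝ, 0 ≤ c ∧ ∀ x y : X,
    γ⁻¹ * dX x y - c ≤ dY (f x) (f y) ∧ dY (f x) (f y) ≤ γ * dX x y + c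

/-!
Contracting edges does not increase distances, so `π` is `1`-Lipschitz. Conversely, two vertices
with the same image are joined by a path of added edges. Since the bonding maps are injective, a
vertex has at most one added edge towards each neighbouring node of `T`, so such a path projects
to a non-backtracking walk, hence a path, of the tree `T` through the nodes of `T_x`; with
identification sizes at most `N` it has fewer than `N` edges. Lifting a geodesic of `G₁ ∗ G₂`
edge by edge, and bridging each fibre by such a path, gives `d(x, y) ≤ (N + 1) · d(π x, π y) + N`.
-/

namespace SimpleGraph

variable {V W : Type*} {G : SimpleGraph V} {H : SimpleGraph W}

theorem reachable_fromRel_iff_eqvGen {r : V → V → Prop} {x y : V} :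
    (fromRel r).Reachable x y ↔ Relation.EqvGen r x y := by
  constructor
  · rw [reachable_iff_reflTransGen]
    intro h
    induction h with
    | refl => exact .refl _
    | tail _ hadj ih =>
      exact ih.trans _ _ _ <|
        ((fromRel_adj _ _ _).mp hadj).2.elim (.rel _ _) fun h => .symm _ _ (.rel _ _ h)
  · intro h
    refine (reachable_is_equivalence (G := fromRel r)).eqvGen_iff.mp (h.mono fun a b hab => ?_)
    by_cases hne : a = b
    · exact hne ▸ Reachable.refl a
    · exact Adj.reachable ((fromRel_adj _ _ _).mpr ⟨hne, Or.inl hab⟩)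

theorem Walk.IsPath.length_lt_ncard {s : Set V} (hs : s.Finite) {u v : V} {p : G.Walk u v}
    (hp : p.IsPath) (hsub : ∀ x ∈ p.support, x ∈ s) : p.length < s.ncard := by
  classical
  have hcard : p.support.toFinset.card = p.length + 1 := by
    rw [List.toFinset_card_of_nodup hp.support_nodup, p.length_support]
  have hle : p.support.toFinset.card ≤ s.ncard := by
    rw [Set.ncard_eq_toFinset_card s hs]
    exact Finset.card_le_card fun x hx => by simpa using hsub x (by simpa using hx)
  omega

theorem Walk.IsPath.map_of_injOn_neighborSet (hH : H.IsAcyclic) {f : G →g H}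
    (hf : ∀ v, Set.InjOn f (G.neighborSet v)) {u v : V} {p : G.Walk u v} (hp : p.IsPath) :
    (p.map f).IsPath := by
  induction p with
  | nil => simp
  | @cons u w v hadj q ih =>
    rw [cons_isPath_iff] at hp
    rw [Walk.map_cons, cons_isPath_iff]
    refine ⟨ih hp.1, fun hmem => ?_⟩
    have hsnd := hH.eq_snd_of_adj_start (ih hp.1) (f.map_adj hadj.symm) hmem
    cases q with
    | nil => exact (f.map_adj hadj).ne (by simpa using hsnd)
    | cons h' q' =>
      simp only [map_cons, getVert_cons_succ, getVert_zero] at hsnd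
      exact hp.2 (hf w hadj.symm h' hsnd ▸ q'.start_mem_support.tail _)

section Contraction

variable {π : V → W}

theorem Walk.exists_walk_apply_length_le
    (hπ : ∀ x y, G.Adj x y → π x = π y ∨ H.Adj (π x) (π y)) {x y : V} (p : G.Walk x y) :
    ∃ q : H.Walk (π x) (π y), q.length ≤ p.length := by
  induction p with
  | nil => exact ⟨nil, le_rfl⟩
  | @cons x z y hadj p ih =>
    obtain ⟨q, hq⟩ := ih
    rcases hπ x z hadj with he | hH
    · exact ⟨q.copy he.symm rfl, by simp only [length_copy, length_cons]; omega⟩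
    · exact ⟨cons hH q, by simp only [length_cons]; omega⟩

theorem Walk.exists_lift_length_le
    (hlift : ∀ a b, H.Adj a b → ∃ x y, π x = a ∧ π y = b ∧ G.Adj x y) {M : ℕ}
    (hM : ∀ x y, π x = π y → ∃ p : G.Walk x y, p.length ≤ M) {a b : W} (q : H.Walk a b)
    {x y : V} (hx : π x = a) (hy : π y = b) :
    ∃ p : G.Walk x y, p.length ≤ (M + 1) * q.length + M := by
  induction q generalizing x with
  | nil => simpa using hM x y (hx.trans hy.symm)
  | @cons a c b hadj q ih =>
    obtain ⟨x', z, rfl, rfl, hxz⟩ := hlift a c hadj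
    obtain ⟨p₁, hp₁⟩ := hM x x' hx
    obtain ⟨p₂, hp₂⟩ := ih (x := z) rfl hy
    refine ⟨p₁.append (cons hxz p₂), ?_⟩
    simp only [length_append, length_cons]
    nlinarith

theorem dist_apply_le_dist_and_dist_le
    (hπ : ∀ x y, G.Adj x y → π x = π y ∨ H.Adj (π x) (π y))
    (hlift : ∀ a b, H.Adj a b → ∃ x y, π x = a ∧ π y = b ∧ G.Adj x y) {M : ℕ}
    (hM : ∀ x y, π x = π y → ∃ p : G.Walk x y, p.length ≤ M) (x y : V) :
    H.dist (π x) (π y) ≤ G.dist x y ∧ G.dist x y ≤ (M + 1) * H.dist (π x) (π y) + M := by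
  by_cases hG : G.Reachable x y
  · obtain ⟨p, hp⟩ := hG.exists_walk_length_eq_dist
    obtain ⟨q, hq⟩ := p.exists_walk_apply_length_le hπ
    obtain ⟨q', hq'⟩ := Reachable.exists_walk_length_eq_dist ⟨q⟩
    obtain ⟨p', hp'⟩ := q'.exists_lift_length_le hlift hM rfl rfl
    exact ⟨(dist_le q).trans (hq.trans hp.le), (dist_le p').trans (hq' ▸ hp')⟩
  · have hH : ¬H.Reachable (π x) (π y) := fun ⟨q⟩ =>
      hG ⟨(q.exists_lift_length_le hlift hM rfl rfl).choose⟩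
    simp [dist_eq_zero_of_not_reachable hG, dist_eq_zero_of_not_reachable hH]

theorem isQuasiIsometryD_graphDist
    (hπ : ∀ x y, G.Adj x y → π x = π y ∨ H.Adj (π x) (π y))
    (hlift : ∀ a b, H.Adj a b → ∃ x y, π x = a ∧ π y = b ∧ G.Adj x y) {M : ℕ}
    (hM : ∀ x y, π x = π y → ∃ p : G.Walk x y, p.length ≤ M) :
    IsQuasiIsometryD (graphDist G) (graphDist H) π := by
  refine ⟨M + 1, by linarith [M.cast_nonneg (α := ℝ)], M, M.cast_nonneg, fun x y => ?_⟩
  obtain ⟨hle, hge⟩ := dist_apply_le_dist_and_dist_le hπ hlift hM x y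
  have hle' : (H.dist (π x) (π y) : ℝ) ≤ G.dist x y := by exact_mod_cast hle
  have hge' : (G.dist x y : ℝ) ≤ (M + 1) * H.dist (π x) (π y) + M := by exact_mod_cast hge
  have hM1 : (0 : ℝ) < M + 1 := by positivity
  simp only [graphDist]
  constructor
  · have : ((M : ℝ) + 1)⁻¹ * G.dist x y ≤ H.dist (π x) (π y) + M := by
      rw [inv_mul_le_iff₀ hM1]
      nlinarith [(H.dist (π x) (π y)).cast_nonneg (α := ℝ), M.cast_nonneg (α := ℝ)]
    linarith
  · nlinarith [(G.dist x y).cast_nonneg (α := ℝ), M.cast_nonneg (α := ℝ)]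

end Contraction

end SimpleGraph

namespace TreeAmalg

variable {V₁ V₂ : Type} {G₁ : SimpleGraph V₁} {G₂ : SimpleGraph V₂} (A : TreeAmalg G₁ G₂)

def crossG : SimpleGraph A.PlusV := SimpleGraph.fromRel A.crossRel

/-- The node set of the subtree `T_x`. -/
def nodeSet (a : A.StarV) : Set A.VT :=
  {u : A.VT | ∃ p : A.PlusV, A.proj p = a ∧ A.nodeOf p = u}

theorem crossG_le_plus : A.crossG ≤ A.Plus := fun p q h => by
  rw [crossG, SimpleGraph.fromRel_adj] at h
  exact (SimpleGraph.fromRel_adj _ _ _).mpr ⟨h.1, h.2.imp Or.inr Or.inr⟩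

theorem proj_eq_iff_reachable {p q : A.PlusV} :
    A.proj p = A.proj q ↔ A.crossG.Reachable p q :=
  Quotient.eq.trans SimpleGraph.reachable_fromRel_iff_eqvGen.symm

theorem adj_nodeOf_of_crossRel {p q : A.PlusV} (h : A.crossRel p q) :
    A.T.Adj (A.nodeOf p) (A.nodeOf q) := by
  rcases p with ⟨u, x⟩ | ⟨v, y⟩ <;> rcases q with ⟨u', x'⟩ | ⟨v', y'⟩
  all_goals first | exact h.1 | nomatch h

def nodeHom : A.crossG →g A.T where
  toFun := A.nodeOf
  map_rel' h := ((SimpleGraph.fromRel_adj _ _ _).mp h).2.elim A.adj_nodeOf_of_crossRel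
    fun h => (A.adj_nodeOf_of_crossRel h).symm

theorem injOn_nodeHom_neighborSet (r : A.PlusV) :
    Set.InjOn A.nodeHom (A.crossG.neighborSet r) := by
  rintro p hp q hq hpq
  simp only [SimpleGraph.mem_neighborSet, crossG, SimpleGraph.fromRel_adj] at hp hq
  rcases r with ⟨u, x⟩ | ⟨v, y⟩ <;> rcases p with ⟨u₁, x₁⟩ | ⟨v₁, y₁⟩ <;>
    rcases q with ⟨u₂, x₂⟩ | ⟨v₂, y₂⟩ <;>
    simp only [crossRel, nodeHom, nodeOf, RelHom.coeFn_mk, Sum.elim_inl, Sum.elim_inr,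
      Sum.inl.injEq, Sum.inr.injEq, Prod.mk.injEq, reduceCtorEq, ne_eq, not_false_eq_true,
      true_and, or_false, false_or, or_self, and_false, not_and] at hp hq hpq ⊢
  · obtain rfl := Subtype.ext hpq
    obtain ⟨_, -, rfl⟩ := hp
    obtain ⟨_, -, rfl⟩ := hq
    exact ⟨rfl, rfl⟩
  · obtain rfl := Subtype.ext hpq
    obtain ⟨_, hx₁, rfl⟩ := hp
    obtain ⟨_, hx₂, hy⟩ := hq
    exact ⟨rfl, (A.bondBij _ _).injOn hx₁ hx₂ hy⟩

theorem exists_plus_walk_length_lt_of_proj_eq {N : ℕ}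
    (hN : ∀ a, (A.nodeSet a).Finite ∧ (A.nodeSet a).ncard ≤ N) {p q : A.PlusV}
    (h : A.proj p = A.proj q) : ∃ W : A.Plus.Walk p q, W.length < N := by
  classical
  obtain ⟨P, hP⟩ := (A.proj_eq_iff_reachable.mp h).exists_isPath
  have hT : (P.map A.nodeHom).IsPath :=
    hP.map_of_injOn_neighborSet A.treeT.isAcyclic A.injOn_nodeHom_neighborSet
  have hsub : ∀ u ∈ (P.map A.nodeHom).support, u ∈ A.nodeSet (A.proj p) := by
    simp only [SimpleGraph.Walk.support_map, List.mem_map]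
    rintro _ ⟨r, hr, rfl⟩
    exact ⟨r, (A.proj_eq_iff_reachable.mpr ⟨P.takeUntil r hr⟩).symm, rfl⟩
  refine ⟨P.mapLe A.crossG_le_plus, ?_⟩
  simpa using (hT.length_lt_ncard (hN _).1 hsub).trans_le (hN _).2

theorem proj_eq_or_star_adj_of_plus_adj {p q : A.PlusV} (h : A.Plus.Adj p q) :
    A.proj p = A.proj q ∨ A.Star.Adj (A.proj p) (A.proj q) :=
  or_iff_not_imp_left.mpr fun hne =>
    (SimpleGraph.fromRel_adj _ _ _).mpr ⟨hne, Or.inl ⟨p, q, rfl, rfl, h⟩⟩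

theorem exists_plus_adj_of_star_adj {a b : A.StarV} (h : A.Star.Adj a b) :
    ∃ p q, A.proj p = a ∧ A.proj q = b ∧ A.Plus.Adj p q :=
  ((SimpleGraph.fromRel_adj _ _ _).mp h).2.elim id
    fun ⟨p, q, hp, hq, h⟩ => ⟨q, p, hq, hp, h.symm⟩

end TreeAmalg

theorem proj_quasiIsometry_general {V₁ V₂ : Type} {G₁ : SimpleGraph V₁} {G₂ : SimpleGraph V₂}
    (A : TreeAmalg G₁ G₂)
    (hfi : A.FiniteIdentification) :
    IsQuasiIsometryD (graphDist A.Plus) (graphDist A.Star) A.proj := by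
  obtain ⟨N, hN⟩ := hfi
  exact SimpleGraph.isQuasiIsometryD_graphDist (fun _ _ => A.proj_eq_or_star_adj_of_plus_adj)
    (fun _ _ => A.exists_plus_adj_of_star_adj) fun _ _ h =>
      (A.exists_plus_walk_length_lt_of_proj_eq hN h).imp fun _ => le_of_lt

/-- **Remark.** For a tree amalgamation `G₁ ∗ G₂` of connected graphs with nonempty adhesion
sets and of finite identification, the canonical map `π : V(G₁ + G₂) → V(G₁ ∗ G₂)` is a
quasi-isometry with respect to the path metrics. -/
theorem proj_quasiIsometry {V₁ V₂ : Type} {G₁ : SimpleGraph V₁} {G₂ : SimpleGraph V₂}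
    (hG₁c : G₁.Connected) (hG₂c : G₂.Connected)
    (A : TreeAmalg G₁ G₂)
    (hne : A.NonemptyAdhesions) (hfi : A.FiniteIdentification) :
    IsQuasiIsometryD (graphDist A.Plus) (graphDist A.Star) A.proj :=
  proj_quasiIsometry_general A hfi
end
end

section
/- Let X and Y be metric spaces and let f : X → Y be a map such that there exist non-decreasing unbounded functions ρ₁, ρ₂ : ℝ₊ → ℝ₊ with ρ₁(d_X(x, x')) ≤ d_Y(f(x), f(x')) ≤ ρ₂(d_X(x, x')) for all x, x' ∈ X, and suppose moreover that there is a constant C ≥ 0 such that every point of Y is within distance C of the image f(X). Then asdim(X) = asdim(Y). -/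
noncomputable section

/-!
A coarse embedding `f : X → Y` transports covers backwards. Given a uniformly bounded cover `𝒱`
of `X`, cover `Y` by balls so large that `f` maps every member of `𝒱`, thickened by `1`, into one
of them; coarsen that ball cover in `Y` to a uniformly bounded cover of multiplicity `≤ n + 1`,
and replace each of its members `U` by the union of the unit balls of `X` that `f` maps into `U`.
These unions are open, uniformly bounded because `f` is effectively proper, coarsen `𝒱`, and a
point of `X` lies in no more of them than `f x` lies in members `U`. So `asdim X ≤ asdim Y`.
Coarse density provides `g : Y → X` with `f ∘ g` uniformly close to the identity; `g` is again a
coarse embedding, which gives the reverse inequality.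
-/

open Metric Set

section Covers

variable {X Y : Type*}

theorem IsCover.of_refines {𝒱 𝒰 : Set (Set X)} (h𝒱 : IsCover 𝒱) (h : Refines 𝒱 𝒰) :
    IsCover 𝒰 := fun x => by
  obtain ⟨V, hV, hxV⟩ := h𝒱 x
  obtain ⟨U, hU, hVU⟩ := h V hV
  exact ⟨U, hU, hVU hxV⟩

theorem MultLE.image {𝒰 : Set (Set Y)} {m : ℕ} (h : MultLE 𝒰 m) (f : X → Y)
    (P : Set Y → Set X) (hP : ∀ U, MapsTo f (P U) U) : MultLE (P '' 𝒰) m := by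
  classical
  intro x F hF
  choose! u hu𝒰 hPu using fun W hW => (hF W hW).1
  have hinj : InjOn u F := fun W₁ hW₁ W₂ hW₂ heq => by
    rw [← hPu W₁ hW₁, ← hPu W₂ hW₂, heq]
  rw [← Finset.card_image_of_injOn hinj]
  refine h (f x) _ fun U hU => ?_
  obtain ⟨W, hW, rfl⟩ := Finset.mem_image.1 hU
  exact ⟨hu𝒰 W hW, hP _ (by rw [hPu W hW]; exact (hF W hW).2)⟩

theorem dOpen_dist_iff [PseudoMetricSpace X] {U : Set X} :
    DOpen (fun a b : X => dist a b) U ↔ IsOpen U := by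
  simp only [DOpen, Metric.isOpen_iff, subset_def, mem_ball, dist_comm]

theorem asdimLE_of_isEmpty [IsEmpty X] (d : X → X → ℝ) (n : ℕ) : AsdimLE d n :=
  fun 𝒱 _ h𝒱 hopen => ⟨𝒱, isEmptyElim, h𝒱, hopen, isEmptyElim, fun V hV => ⟨V, hV, subset_rfl⟩⟩

theorem asdim_eq_of_forall_asdimLE_iff {d : X → X → ℝ} {d' : Y → Y → ℝ}
    (h : ∀ n, AsdimLE d n ↔ AsdimLE d' n) : asdim d = asdim d' := by
  simp only [asdim, h]

theorem AsdimLE.exists_coarsening_ballCover [PseudoMetricSpace X] {n : ℕ}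
    (h : AsdimLE (fun a b : X => dist a b) n) {r : ℝ} (hr : 0 < r) :
    ∃ 𝒰 : Set (Set X), UnifBdd (fun a b : X => dist a b) 𝒰 ∧ MultLE 𝒰 (n + 1) ∧
      ∀ x, ∃ U ∈ 𝒰, ball x r ⊆ U := by
  have hbdd : UnifBdd (fun a b : X => dist a b) (range fun x => ball x r) := by
    refine ⟨2 * r, ?_⟩
    rintro _ ⟨c, rfl⟩ x hx y hy
    linarith [dist_triangle_right x y c, mem_ball.1 hx, mem_ball.1 hy]
  obtain ⟨𝒰, -, h𝒰bdd, -, h𝒰mult, hrefines⟩ :=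
    h _ (fun x => ⟨_, mem_range_self x, mem_ball_self hr⟩) hbdd
      (by rintro _ ⟨c, rfl⟩; exact dOpen_dist_iff.2 isOpen_ball)
  exact ⟨𝒰, h𝒰bdd, h𝒰mult, fun x => hrefines _ (mem_range_self x)⟩

end Covers

section UnitBallPullback

variable {X Y : Type*} [PseudoMetricSpace X]

/-- An open substitute for `f ⁻¹' U`, which need not be open since `f` need not be continuous. -/
def unitBallPullback (f : X → Y) (U : Set Y) : Set X :=
  ⋃ (x₀ : X) (_ : MapsTo f (ball x₀ 1) U), ball x₀ 1

theorem isOpen_unitBallPullback (f : X → Y) (U : Set Y) : IsOpen (unitBallPullback f U) :=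
  isOpen_biUnion fun _ _ => isOpen_ball

theorem mapsTo_unitBallPullback (f : X → Y) (U : Set Y) :
    MapsTo f (unitBallPullback f U) U := fun _ hx => by
  obtain ⟨_, hx₀U, hx⟩ := mem_iUnion₂.1 hx
  exact hx₀U hx

theorem mem_unitBallPullback {f : X → Y} {U : Set Y} {x : X} (h : MapsTo f (ball x 1) U) :
    x ∈ unitBallPullback f U :=
  mem_biUnion h (mem_ball_self one_pos)

end UnitBallPullback

section CoarseEmbedding

variable {X Y : Type*} [PseudoMetricSpace X] [PseudoMetricSpace Y]

/-- The control functions `ρ₁, ρ₂` of a coarse embedding, in `∀ ∃` form. -/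
structure IsCoarseEmbedding (f : X → Y) : Prop where
  bornologous : ∀ R, ∃ S, ∀ x x', dist x x' ≤ R → dist (f x) (f x') ≤ S
  effectivelyProper : ∀ S, ∃ R, ∀ x x', dist (f x) (f x') ≤ S → dist x x' ≤ R

theorem IsCoarseEmbedding.of_control {f : X → Y} {ρ₁ ρ₂ : ℝ → ℝ}
    (hρ₁mono : ∀ s t, 0 ≤ s → s ≤ t → ρ₁ s ≤ ρ₁ t) (hρ₂mono : ∀ s t, 0 ≤ s → s ≤ t → ρ₂ s ≤ ρ₂ t)
    (hρ₁unb : ∀ M, ∃ s, 0 ≤ s ∧ M ≤ ρ₁ s)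
    (hf : ∀ x x', ρ₁ (dist x x') ≤ dist (f x) (f x') ∧ dist (f x) (f x') ≤ ρ₂ (dist x x')) :
    IsCoarseEmbedding f where
  bornologous R := ⟨ρ₂ R, fun x x' h => (hf x x').2.trans (hρ₂mono _ _ dist_nonneg h)⟩
  effectivelyProper S := by
    obtain ⟨s, hs, hSs⟩ := hρ₁unb (S + 1)
    refine ⟨s, fun x x' h => le_of_not_gt fun hlt => ?_⟩
    linarith [(hf x x').1, hρ₁mono s _ hs hlt.le]

theorem IsCoarseEmbedding.of_dist_comp_le {f : X → Y} (hf : IsCoarseEmbedding f) {g : Y → X}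
    {C : ℝ} (hg : ∀ y, dist y (f (g y)) ≤ C) : IsCoarseEmbedding g where
  bornologous R := by
    obtain ⟨R', hR'⟩ := hf.effectivelyProper (R + 2 * C)
    refine ⟨R', fun y y' h => hR' _ _ ?_⟩
    linarith [dist_triangle4 (f (g y)) y y' (f (g y')), dist_comm (f (g y)) y, hg y, hg y']
  effectivelyProper S := by
    obtain ⟨S', hS'⟩ := hf.bornologous S
    refine ⟨S' + 2 * C, fun y y' h => ?_⟩
    linarith [dist_triangle4 y (f (g y)) (f (g y')) y', dist_comm (f (g y')) y', hg y, hg y',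
      hS' _ _ h]

theorem IsCoarseEmbedding.asdimLE {f : X → Y} (hf : IsCoarseEmbedding f) {n : ℕ}
    (hY : AsdimLE (fun a b : Y => dist a b) n) : AsdimLE (fun a b : X => dist a b) n := by
  rcases isEmpty_or_nonempty X with hX | ⟨⟨x₁⟩⟩
  · exact asdimLE_of_isEmpty _ n
  rintro 𝒱 h𝒱 ⟨D, hD⟩ -
  obtain ⟨S, hS⟩ := hf.bornologous (D + 1)
  obtain ⟨𝒰, ⟨E, hE⟩, h𝒰mult, h𝒰ball⟩ :=
    hY.exists_coarsening_ballCover (r := max S 0 + 1) (by positivity)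
  obtain ⟨R, hR⟩ := hf.effectivelyProper E
  have hrefines : Refines 𝒱 (unitBallPullback f '' 𝒰) := by
    intro V hV
    obtain ⟨c, hc⟩ : ∃ c, ∀ x ∈ V, dist x c ≤ D := by
      rcases V.eq_empty_or_nonempty with rfl | ⟨c, hcV⟩
      · exact ⟨x₁, fun x hx => absurd hx (notMem_empty x)⟩
      · exact ⟨c, fun x hx => hD V hV x hx c hcV⟩
    obtain ⟨U, hU, hcU⟩ := h𝒰ball (f c)
    refine ⟨_, mem_image_of_mem _ hU, fun x hx => mem_unitBallPullback fun x' hx' => hcU ?_⟩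
    have hx'c : dist x' c ≤ D + 1 := by
      linarith [dist_triangle x' x c, mem_ball.1 hx', hc x hx]
    exact mem_ball.2 ((hS _ _ hx'c).trans_lt (by linarith [le_max_left S 0]))
  refine ⟨_, h𝒱.of_refines hrefines, ⟨R, ?_⟩, ?_, h𝒰mult.image f _ (mapsTo_unitBallPullback f),
    hrefines⟩
  · rintro _ ⟨U, hU, rfl⟩ x hx y hy
    exact hR x y (hE U hU _ (mapsTo_unitBallPullback f U hx) _ (mapsTo_unitBallPullback f U hy))
  · rintro _ ⟨U, -, rfl⟩
    exact dOpen_dist_iff.2 (isOpen_unitBallPullback f U)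

end CoarseEmbedding

theorem asdim_eq_of_coarseEquiv_general {X Y : Type*} [MetricSpace X] [MetricSpace Y] (f : X → Y)
    (ρ₁ ρ₂ : ℝ → ℝ)
    (hρ₁mono : ∀ s t : ℝ, 0 ≤ s → s ≤ t → ρ₁ s ≤ ρ₁ t)
    (hρ₂mono : ∀ s t : ℝ, 0 ≤ s → s ≤ t → ρ₂ s ≤ ρ₂ t)
    (hρ₁unb : ∀ M : ℝ, ∃ s : ℝ, 0 ≤ s ∧ M ≤ ρ₁ s)
    (hf : ∀ x x' : X, ρ₁ (dist x x') ≤ dist (f x) (f x') ∧ dist (f x) (f x') ≤ ρ₂ (dist x x'))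
    (C : ℝ) (hdense : ∀ y : Y, ∃ x : X, dist y (f x) ≤ C) :
    asdim (fun x y : X => dist x y) = asdim (fun x y : Y => dist x y) := by
  have hfX : IsCoarseEmbedding f := .of_control hρ₁mono hρ₂mono hρ₁unb hf
  choose g hg using hdense
  have hgY : IsCoarseEmbedding g := hfX.of_dist_comp_le hg
  exact asdim_eq_of_forall_asdimLE_iff fun n => ⟨hgY.asdimLE, hfX.asdimLE⟩

/-- **Proposition.** The asymptotic dimension is invariant under coarse equivalence: if
`f : X → Y` satisfies `ρ₁(d(x,x')) ≤ d(f x, f x') ≤ ρ₂(d(x,x'))` for non-decreasing unbounded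
functions `ρ₁, ρ₂ : ℝ₊ → ℝ₊`, and the image of `f` is coarsely dense in `Y`, then
`asdim(X) = asdim(Y)`. -/
theorem asdim_eq_of_coarseEquiv {X Y : Type*} [MetricSpace X] [MetricSpace Y] (f : X → Y)
    (ρ₁ ρ₂ : ℝ → ℝ)
    (hρ₁0 : ∀ s : ℝ, 0 ≤ s → 0 ≤ ρ₁ s) (hρ₂0 : ∀ s : ℝ, 0 ≤ s → 0 ≤ ρ₂ s)
    (hρ₁mono : ∀ s t : ℝ, 0 ≤ s → s ≤ t → ρ₁ s ≤ ρ₁ t)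
    (hρ₂mono : ∀ s t : ℝ, 0 ≤ s → s ≤ t → ρ₂ s ≤ ρ₂ t)
    (hρ₁unb : ∀ M : ℝ, ∃ s : ℝ, 0 ≤ s ∧ M ≤ ρ₁ s)
    (hρ₂unb : ∀ M : ℝ, ∃ s : ℝ, 0 ≤ s ∧ M ≤ ρ₂ s)
    (hf : ∀ x x' : X, ρ₁ (dist x x') ≤ dist (f x) (f x') ∧ dist (f x) (f x') ≤ ρ₂ (dist x x'))
    (C : ℝ) (hC : 0 ≤ C) (hdense : ∀ y : Y, ∃ x : X, dist y (f x) ≤ C) :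
    asdim (fun x y : X => dist x y) = asdim (fun x y : Y => dist x y) :=
  asdim_eq_of_coarseEquiv_general f ρ₁ ρ₂ hρ₁mono hρ₂mono hρ₁unb hf C hdense
end
end

section
/- (Infinite Union Theorem) Let X be a metric space, n ∈ ℕ, and X = ⋃_{i∈I} X_i for a family (X_i)_{i∈I} of subsets of X (each with the induced metric) satisfying asdim(X_i) ≤ n uniformly. Suppose that for every r > 0 there exists a subset Y_r ⊆ X with asdim(Y_r) ≤ n such that d(X_i ∖ Y_r, X_j ∖ Y_r) ≥ r for all i ≠ j with X_i ≠ X_j. Then asdim(X) ≤ n. -/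
noncomputable section

/-- A family `𝒮` of subsets of `X` satisfies `asdim ≤ n` *uniformly*: for every `r > 0` there
is `R ∈ ℕ` such that every `s ∈ 𝒮` admits `r`-disjoint families `𝒱₀, …, 𝒱ₙ` of `R`-bounded
subsets of `s` whose union covers `s`. -/
def UnifAsdimLE {X : Type*} (d : X → X → ℝ) (𝒮 : Set (Set X)) (n : ℕ) : Prop :=
  ∀ r > (0 : ℝ), ∃ R : ℕ, ∀ s ∈ 𝒮, ∃ 𝒱 : Fin (n + 1) → Set (Set X),
    (∀ j, ∀ V ∈ 𝒱 j, V ⊆ s ∧ ∀ x ∈ V, ∀ y ∈ V, d x y ≤ (R : ℝ)) ∧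
    (∀ j, RDisjoint d r (𝒱 j)) ∧
    (∀ x ∈ s, ∃ j, ∃ V ∈ 𝒱 j, x ∈ V)

/-!
Use the colouring form of `asdim ≤ n`: for every `r` there are `n + 1` uniformly bounded
`r`-disjoint families covering the space. Given `r`, colour `X ∖ Yᵣ` by the pieces `V ∖ Yᵣ` of the
uniform colourings of the `Xᵢ`; by the separation hypothesis they are `r`-disjoint also across
different `Xᵢ`, and they have diameter at most some `R`. Colour `Yᵣ` at the larger scale `3r + 2R`.
In each colour, absorb every piece of `X ∖ Yᵣ` that comes `r`-close to a piece of `Yᵣ` into that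
piece: an enlarged piece stays within `r + R` of the original one, so the enlarged pieces are still
`r`-apart.
-/

open Metric Set

lemma asdimLE_mono {X : Type*} {d : X → X → ℝ} {m n : ℕ} (h : AsdimLE d m) (hmn : m ≤ n) :
    AsdimLE d n := by
  intro 𝒱 hcov hbdd hopen
  obtain ⟨𝒰, hcov', hbdd', hopen', hmult, href⟩ := h 𝒱 hcov hbdd hopen
  exact ⟨𝒰, hcov', hbdd', hopen', fun x F hF => (hmult x F hF).trans (by omega), href⟩

lemma asdim_le_iff {X : Type*} {d : X → X → ℝ} {n : ℕ} : asdim d ≤ n ↔ AsdimLE d n := by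
  refine ⟨fun h => ?_, fun h => sInf_le ⟨n, rfl, h⟩⟩
  have hne : {k : ℕ∞ | ∃ m : ℕ, k = m ∧ AsdimLE d m}.Nonempty := by
    by_contra hempty
    rw [not_nonempty_iff_eq_empty] at hempty
    simp [asdim, hempty] at h
  obtain ⟨m, hm, hdim⟩ := csInf_mem hne
  rw [asdim, hm, Nat.cast_le] at h
  exact asdimLE_mono hdim h

lemma MultLE.finite_setOf_mem {X : Type*} {𝒰 : Set (Set X)} {m : ℕ} (h : MultLE 𝒰 m) (x : X) :
    {U ∈ 𝒰 | x ∈ U}.Finite := by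
  by_contra hinf
  obtain ⟨F, hF, hcard⟩ := Set.Infinite.exists_subset_card_eq hinf (m + 1)
  have := h x F fun U hU => hF hU
  omega

lemma MultLE.ncard_setOf_mem_le {X : Type*} {𝒰 : Set (Set X)} {m : ℕ} (h : MultLE 𝒰 m)
    (x : X) : {U ∈ 𝒰 | x ∈ U}.ncard ≤ m := by
  rw [ncard_eq_toFinset_card _ (h.finite_setOf_mem x)]
  exact h x _ fun U hU => (h.finite_setOf_mem x).mem_toFinset.1 hU

lemma MultLE.insert_empty {X : Type*} {𝒰 : Set (Set X)} {m : ℕ} (h : MultLE 𝒰 m) :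
    MultLE (insert ∅ 𝒰) m := by
  refine fun x F hF => h x F fun U hU => ⟨?_, (hF U hU).2⟩
  obtain ⟨rfl | hU', hx⟩ := hF U hU
  exacts [absurd hx (notMem_empty x), hU']

lemma Antitone.exists_succ_eq_of_ncard_le {α : Type*} {S : ℕ → Set α} {m : ℕ} (hS : Antitone S)
    (hfin : (S 0).Finite) (hcard : (S 0).ncard ≤ m) (hne : (S m).Nonempty) :
    ∃ k < m, S (k + 1) = S k := by
  by_contra! hstrict
  have hdecr : ∀ k ≤ m, (S k).ncard + k ≤ (S 0).ncard := by
    intro k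
    induction k with
    | zero => simp
    | succ k ih =>
      intro hk
      have hlt : (S (k + 1)).ncard < (S k).ncard :=
        ncard_lt_ncard ((hS k.le_succ).ssubset_of_ne (hstrict k hk)) (hfin.subset (hS k.zero_le))
      have := ih (by omega)
      omega
  have hpos := (ncard_pos (hfin.subset (hS m.zero_le))).2 hne
  have := hdecr m le_rfl
  omega

section PseudoMetric

variable {X : Type*} [PseudoMetricSpace X]

lemma IsOpen.dOpen {U : Set X} (hU : IsOpen U) : DOpen (fun x y => dist x y) U := by
  intro x hx
  obtain ⟨ε, hε, hball⟩ := isOpen_iff.1 hU x hx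
  exact ⟨ε, hε, fun y hy => hball (mem_ball'.2 hy)⟩

lemma RDisjoint.union {r : ℝ} {𝒱 𝒲 : Set (Set X)} (h𝒱 : RDisjoint (fun x y => dist x y) r 𝒱)
    (h𝒲 : RDisjoint (fun x y => dist x y) r 𝒲)
    (hcross : ∀ V ∈ 𝒱, ∀ W ∈ 𝒲, V ≠ W → ∀ x ∈ V, ∀ y ∈ W, r ≤ dist x y) :
    RDisjoint (fun x y => dist x y) r (𝒱 ∪ 𝒲) := by
  rintro V (hV | hV) W (hW | hW) hne x hx y hy
  · exact h𝒱 V hV W hW hne x hx y hy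
  · exact hcross V hV W hW hne x hx y hy
  · exact (hcross W hW V hV hne.symm y hy x hx).trans_eq (dist_comm y x)
  · exact h𝒲 V hV W hW hne x hx y hy

lemma multLE_iUnion_thickening {ι : Type*} [Fintype ι] {ε : ℝ} {𝒲 : ι → Set (Set X)}
    (h : ∀ j, RDisjoint (fun x y => dist x y) (2 * ε) (𝒲 j)) :
    MultLE (⋃ j, thickening ε '' 𝒲 j) (Fintype.card ι) := by
  intro x F hF
  rcases F.eq_empty_or_nonempty with rfl | ⟨U₀, hU₀⟩
  · simp
  have : Nonempty ι := ⟨(mem_iUnion.1 (hF U₀ hU₀).1).choose⟩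
  have hcol : ∀ U ∈ F, ∃ j, ∃ W ∈ 𝒲 j, thickening ε W = U := fun U hU => mem_iUnion.1 (hF U hU).1
  choose! c W hW hWU using hcol
  calc F.card ≤ (Finset.univ : Finset ι).card := by
        refine Finset.card_le_card_of_injOn c (fun _ _ => Finset.mem_coe.2 (Finset.mem_univ _)) ?_
        intro U hU U' hU' hc
        rw [← hWU U hU, ← hWU U' hU']
        by_contra hne
        obtain ⟨w, hw, hxw⟩ := mem_thickening_iff.1 (hWU U hU ▸ (hF U hU).2)
        obtain ⟨w', hw', hxw'⟩ := mem_thickening_iff.1 (hWU U' hU' ▸ (hF U' hU').2)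
        have hsep := h (c U) _ (hW U hU) _ (hc ▸ hW U' hU') (fun hWW => hne (by rw [hWW]))
          w hw w' hw'
        have := dist_triangle_left w w' x
        linarith
    _ = Fintype.card ι := Finset.card_univ

structure IsColoredCover {ι : Type*} (r D : ℝ) (s : Set X) (𝒱 : ι → Set (Set X)) : Prop where
  rDisjoint : ∀ j, RDisjoint (fun x y => dist x y) r (𝒱 j)
  dist_le : ∀ j, ∀ V ∈ 𝒱 j, ∀ x ∈ V, ∀ y ∈ V, dist x y ≤ D
  exists_mem : ∀ x ∈ s, ∃ j, ∃ V ∈ 𝒱 j, x ∈ V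

namespace IsColoredCover

variable {ι : Type*} {r D : ℝ} {s t : Set X} {𝒱 : ι → Set (Set X)}

lemma mono (h : IsColoredCover r D t 𝒱) (hst : s ⊆ t) : IsColoredCover r D s 𝒱 :=
  ⟨h.rDisjoint, h.dist_le, fun x hx => h.exists_mem x (hst hx)⟩

lemma image {Y : Type*} [PseudoMetricSpace Y] {f : Y → X} (hf : Isometry f) {s : Set Y}
    {𝒱 : ι → Set (Set Y)} (h : IsColoredCover r D s 𝒱) :
    IsColoredCover r D (f '' s) (fun j => image f '' 𝒱 j) where
  rDisjoint j := by
    rintro _ ⟨V, hV, rfl⟩ _ ⟨W, hW, rfl⟩ hne _ ⟨x, hx, rfl⟩ _ ⟨y, hy, rfl⟩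
    exact (h.rDisjoint j V hV W hW (by rintro rfl; exact hne rfl) x hx y hy).trans_eq
      (hf.dist_eq x y).symm
  dist_le j := by
    rintro _ ⟨V, hV, rfl⟩ _ ⟨x, hx, rfl⟩ _ ⟨y, hy, rfl⟩
    exact (hf.dist_eq x y).trans_le (h.dist_le j V hV x hx y hy)
  exists_mem := by
    rintro _ ⟨x, hx, rfl⟩
    obtain ⟨j, V, hV, hxV⟩ := h.exists_mem x hx
    exact ⟨j, f '' V, mem_image_of_mem _ hV, mem_image_of_mem _ hxV⟩

end IsColoredCover

lemma asdimLE_of_forall_isColoredCover {n : ℕ}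
    (h : ∀ r > (0 : ℝ), ∃ 𝒲 : Fin (n + 1) → Set (Set X), ∃ M, IsColoredCover r M univ 𝒲) :
    AsdimLE (fun x y : X => dist x y) n := by
  rintro 𝒱 - ⟨D, hD⟩ -
  set ε := max D 0 + 1
  have hε : 0 < ε := by positivity
  have hDε : D < ε := (le_max_left D 0).trans_lt (lt_add_one _)
  obtain ⟨𝒲, M, h𝒲⟩ := h (2 * ε) (by positivity)
  refine ⟨insert ∅ (⋃ j, thickening ε '' 𝒲 j), ?_, ⟨M + 2 * ε, ?_⟩, ?_, ?_, ?_⟩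
  · intro x
    obtain ⟨j, W, hW, hx⟩ := h𝒲.exists_mem x (mem_univ x)
    exact ⟨thickening ε W, .inr (mem_iUnion.2 ⟨j, W, hW, rfl⟩), self_subset_thickening hε W hx⟩
  · rintro _ (rfl | hU) x hx y hy
    · exact absurd hx (notMem_empty x)
    obtain ⟨j, W, hW, rfl⟩ := mem_iUnion.1 hU
    obtain ⟨w, hw, hxw⟩ := mem_thickening_iff.1 hx
    obtain ⟨w', hw', hyw'⟩ := mem_thickening_iff.1 hy
    have := h𝒲.dist_le j W hW w hw w' hw'
    have := dist_triangle4 x w w' y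
    rw [dist_comm w' y] at this
    linarith
  · rintro _ (rfl | hU)
    · exact isOpen_empty.dOpen
    obtain ⟨j, W, hW, rfl⟩ := mem_iUnion.1 hU
    exact isOpen_thickening.dOpen
  · simpa using (multLE_iUnion_thickening h𝒲.rDisjoint).insert_empty
  · intro V hV
    rcases V.eq_empty_or_nonempty with rfl | ⟨x, hx⟩
    · exact ⟨∅, mem_insert _ _, le_rfl⟩
    obtain ⟨j, W, hW, hxW⟩ := h𝒲.exists_mem x (mem_univ x)
    refine ⟨thickening ε W, .inr (mem_iUnion.2 ⟨j, W, hW, rfl⟩), fun y hy => ?_⟩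
    exact mem_thickening_iff.2 ⟨x, hxW, (hD V hV y hy x hx).trans_lt hDε⟩

def setsContainingBall (𝒰 : Set (Set X)) (z : X) (ρ : ℝ) : Set (Set X) :=
  {U ∈ 𝒰 | closedBall z ρ ⊆ U}

lemma setsContainingBall_antitone (𝒰 : Set (Set X)) (z : X) :
    Antitone (setsContainingBall 𝒰 z) :=
  fun _ _ hρ _ hU => ⟨hU.1, (closedBall_subset_closedBall hρ).trans hU.2⟩

lemma lt_dist_of_mem_setsContainingBall {𝒰 : Set (Set X)} {U : Set X} {a b : X} {ρ r : ℝ}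
    (ha : U ∈ setsContainingBall 𝒰 a (ρ + r)) (hb : U ∉ setsContainingBall 𝒰 b ρ) :
    r < dist a b := by
  by_contra! hle
  exact hb ⟨ha.1, (closedBall_subset_closedBall' (by rw [dist_comm]; linarith)).trans ha.2⟩

def levelPieces (𝒰 : Set (Set X)) (ρ r : ℝ) : Set (Set X) :=
  (fun T => {z | setsContainingBall 𝒰 z ρ = T ∧ setsContainingBall 𝒰 z (ρ + r) = T}) ''
    {T | T.Nonempty}

lemma rDisjoint_levelPieces (𝒰 : Set (Set X)) (ρ r : ℝ) :
    RDisjoint (fun x y => dist x y) r (levelPieces 𝒰 ρ r) := by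
  rintro _ ⟨T, -, rfl⟩ _ ⟨T', -, rfl⟩ hne x ⟨hx, hx'⟩ y ⟨hy, hy'⟩
  have hTT' : ¬T ⊆ T' ∨ ¬T' ⊆ T := by
    by_contra! h
    exact hne (by rw [h.1.antisymm h.2])
  rcases hTT' with hTT' | hT'T
  · obtain ⟨U, hUT, hUT'⟩ := not_subset.1 hTT'
    exact (lt_dist_of_mem_setsContainingBall (hx' ▸ hUT) (hy ▸ hUT')).le
  · obtain ⟨U, hUT', hUT⟩ := not_subset.1 hT'T
    exact (lt_dist_of_mem_setsContainingBall (hy' ▸ hUT') (hx ▸ hUT)).le.trans_eq (dist_comm y x)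

lemma dist_le_of_mem_levelPieces {𝒰 : Set (Set X)} {ρ r B : ℝ} (hρ : 0 ≤ ρ)
    (hB : ∀ U ∈ 𝒰, ∀ x ∈ U, ∀ y ∈ U, dist x y ≤ B) :
    ∀ V ∈ levelPieces 𝒰 ρ r, ∀ x ∈ V, ∀ y ∈ V, dist x y ≤ B := by
  rintro _ ⟨T, ⟨U, hUT⟩, rfl⟩ x ⟨hx, -⟩ y ⟨hy, -⟩
  have hUx : U ∈ setsContainingBall 𝒰 x ρ := hx ▸ hUT
  have hUy : U ∈ setsContainingBall 𝒰 y ρ := hy ▸ hUT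
  exact hB U hUx.1 x (hUx.2 (mem_closedBall_self hρ)) y (hUy.2 (mem_closedBall_self hρ))

/-- By the multiplicity bound, the members of `𝒰` containing `closedBall z (k * r)` decrease from
at most `m` sets at `k = 0` to a nonempty set at `k = m`, so they stabilise at some step `k < m`. -/
lemma exists_mem_levelPieces {𝒰 : Set (Set X)} {m : ℕ} {r : ℝ} (hr : 0 ≤ r) (hmult : MultLE 𝒰 m)
    {z : X} {U : Set X} (hU : U ∈ 𝒰) (hzU : closedBall z (m * r) ⊆ U) :
    ∃ k < m, ∃ V ∈ levelPieces 𝒰 (k * r) r, z ∈ V := by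
  set S : ℕ → Set (Set X) := fun k => setsContainingBall 𝒰 z (k * r)
  have hS : Antitone S := fun k l hkl =>
    setsContainingBall_antitone 𝒰 z (mul_le_mul_of_nonneg_right (Nat.cast_le.2 hkl) hr)
  have hS0 : S 0 ⊆ {U ∈ 𝒰 | z ∈ U} := fun U hU => ⟨hU.1, hU.2 (by simp)⟩
  obtain ⟨k, hk, hstable⟩ := hS.exists_succ_eq_of_ncard_le ((hmult.finite_setOf_mem z).subset hS0)
    ((ncard_le_ncard hS0 (hmult.finite_setOf_mem z)).trans (hmult.ncard_setOf_mem_le z))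
    ⟨U, hU, hzU⟩
  refine ⟨k, hk, _, ⟨S k, Nonempty.mono (hS hk.le) ⟨U, hU, hzU⟩, rfl⟩, rfl, ?_⟩
  simpa [S, add_mul] using hstable

lemma AsdimLE.exists_isColoredCover {n : ℕ} (h : AsdimLE (fun x y : X => dist x y) n) {r : ℝ}
    (hr : 0 < r) : ∃ 𝒱 : Fin (n + 1) → Set (Set X), ∃ D, IsColoredCover r D univ 𝒱 := by
  set L := (n + 2) * r
  obtain ⟨𝒰, -, ⟨B, hB⟩, -, hmult, href⟩ := h (range fun z => ball z L)
    (fun z => ⟨ball z L, mem_range_self z, mem_ball_self (by positivity)⟩)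
    ⟨2 * L, by
      rintro _ ⟨z, rfl⟩ x hx y hy
      have := dist_triangle_right x y z
      linarith [mem_ball.1 hx, mem_ball.1 hy]⟩
    (by rintro _ ⟨z, rfl⟩; exact isOpen_ball.dOpen)
  refine ⟨fun k => levelPieces 𝒰 (k * r) r, B,
    ⟨fun k => rDisjoint_levelPieces 𝒰 _ r, fun k => dist_le_of_mem_levelPieces (by positivity) hB,
      fun z _ => ?_⟩⟩
  obtain ⟨U, hU, hzU⟩ := href (ball z L) (mem_range_self z)
  have hball : closedBall z ((n + 1 : ℕ) * r) ⊆ U :=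
    (closedBall_subset_ball (by push_cast; linarith)).trans hzU
  obtain ⟨k, hk, V, hV, hzV⟩ := exists_mem_levelPieces hr.le hmult hU hball
  exact ⟨⟨k, hk⟩, V, hV, hzV⟩

lemma asdimLE_iff_forall_isColoredCover {n : ℕ} :
    AsdimLE (fun x y : X => dist x y) n ↔
      ∀ r > (0 : ℝ), ∃ 𝒱 : Fin (n + 1) → Set (Set X), ∃ D, IsColoredCover r D univ 𝒱 :=
  ⟨fun h _ hr => h.exists_isColoredCover hr, asdimLE_of_forall_isColoredCover⟩

def absorbInto (r : ℝ) (𝒜 : Set (Set X)) (W : Set X) : Set X :=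
  W ∪ ⋃₀ {A ∈ 𝒜 | ∃ a ∈ A, ∃ w ∈ W, dist a w < r}

def absorb (r : ℝ) (𝒲 𝒜 : Set (Set X)) : Set (Set X) :=
  absorbInto r 𝒜 '' 𝒲 ∪ {A ∈ 𝒜 | ∀ W ∈ 𝒲, ∀ a ∈ A, ∀ w ∈ W, r ≤ dist a w}

section Absorb

variable {r R : ℝ} {𝒲 𝒜 : Set (Set X)}

lemma exists_dist_le_of_mem_absorbInto (hR : ∀ A ∈ 𝒜, ∀ x ∈ A, ∀ y ∈ A, dist x y ≤ R)
    (hrR : 0 ≤ r + R) {W : Set X} {x : X} (hx : x ∈ absorbInto r 𝒜 W) :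
    ∃ w ∈ W, dist x w ≤ r + R := by
  rcases hx with hx | ⟨A, ⟨hA, a, ha, w, hw, haw⟩, hxA⟩
  · exact ⟨x, hx, by rwa [dist_self]⟩
  · have := dist_triangle x a w
    have := hR A hA x hxA a ha
    exact ⟨w, hw, by linarith⟩

lemma rDisjoint_absorb {ℓ : ℝ} (h𝒲 : RDisjoint (fun x y => dist x y) ℓ 𝒲)
    (h𝒜 : RDisjoint (fun x y => dist x y) r 𝒜) (hR : ∀ A ∈ 𝒜, ∀ x ∈ A, ∀ y ∈ A, dist x y ≤ R)
    (hrR : 0 ≤ r + R) (hℓ : 3 * r + 2 * R ≤ ℓ) :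
    RDisjoint (fun x y => dist x y) r (absorb r 𝒲 𝒜) := by
  refine RDisjoint.union ?_ (fun A hA A' hA' => h𝒜 A hA.1 A' hA'.1) ?_
  · rintro _ ⟨W, hW, rfl⟩ _ ⟨W', hW', rfl⟩ hne x hx y hy
    obtain ⟨w, hw, hxw⟩ := exists_dist_le_of_mem_absorbInto hR hrR hx
    obtain ⟨w', hw', hyw'⟩ := exists_dist_le_of_mem_absorbInto hR hrR hy
    have := h𝒲 W hW W' hW' (by rintro rfl; exact hne rfl) w hw w' hw'
    have := dist_triangle4 w x y w'
    rw [dist_comm w x] at this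

    linarith
  · rintro _ ⟨W, hW, rfl⟩ A' ⟨hA', hfar⟩ - x hx y hy
    rcases hx with hx | ⟨A, ⟨hA, a, ha, w, hw, haw⟩, hxA⟩
    · exact (hfar W hW y hy x hx).trans_eq (dist_comm y x)
    · refine h𝒜 A hA A' hA' ?_ x hxA y hy
      rintro rfl
      exact (hfar W hW a ha w hw).not_gt haw

lemma dist_le_of_mem_absorb {M : ℝ} (hM : ∀ W ∈ 𝒲, ∀ x ∈ W, ∀ y ∈ W, dist x y ≤ M)
    (hR : ∀ A ∈ 𝒜, ∀ x ∈ A, ∀ y ∈ A, dist x y ≤ R) (hrR : 0 ≤ r + R) :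
    ∀ V ∈ absorb r 𝒲 𝒜, ∀ x ∈ V, ∀ y ∈ V, dist x y ≤ max (M + 2 * (r + R)) R := by
  rintro V (⟨W, hW, rfl⟩ | ⟨hA, -⟩) x hx y hy
  · obtain ⟨w, hw, hxw⟩ := exists_dist_le_of_mem_absorbInto hR hrR hx
    obtain ⟨w', hw', hyw'⟩ := exists_dist_le_of_mem_absorbInto hR hrR hy
    have := hM W hW w hw w' hw'
    have := dist_triangle4 x w w' y
    rw [dist_comm w' y] at this
    exact le_max_of_le_left (by linarith)
  · exact le_max_of_le_right (hR V hA x hx y hy)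

lemma sUnion_union_subset_sUnion_absorb : ⋃₀ 𝒲 ∪ ⋃₀ 𝒜 ⊆ ⋃₀ absorb r 𝒲 𝒜 := by
  rintro x (⟨W, hW, hx⟩ | ⟨A, hA, hx⟩)
  · exact ⟨_, .inl ⟨W, hW, rfl⟩, .inl hx⟩
  by_cases hnear : ∃ W ∈ 𝒲, ∃ a ∈ A, ∃ w ∈ W, dist a w < r
  · obtain ⟨W, hW, hAW⟩ := hnear
    exact ⟨_, .inl ⟨W, hW, rfl⟩, .inr ⟨A, ⟨hA, hAW⟩, hx⟩⟩
  · push Not at hnear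
    exact ⟨A, .inr ⟨hA, hnear⟩, hx⟩

end Absorb

lemma IsColoredCover.absorb {ι : Type*} {r R ℓ M : ℝ} {s t : Set X} {𝒲 𝒜 : ι → Set (Set X)}
    (h𝒲 : IsColoredCover ℓ M s 𝒲) (h𝒜 : IsColoredCover r R t 𝒜) (hrR : 0 ≤ r + R)
    (hℓ : 3 * r + 2 * R ≤ ℓ) :
    IsColoredCover r (max (M + 2 * (r + R)) R) (s ∪ t) (fun j => absorb r (𝒲 j) (𝒜 j)) where
  rDisjoint j := rDisjoint_absorb (h𝒲.rDisjoint j) (h𝒜.rDisjoint j) (h𝒜.dist_le j) hrR hℓ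
  dist_le j := dist_le_of_mem_absorb (h𝒲.dist_le j) (h𝒜.dist_le j) hrR
  exists_mem x hx := by
    have hj : ∃ j, x ∈ ⋃₀ 𝒲 j ∪ ⋃₀ 𝒜 j := by
      rcases hx with hx | hx
      · obtain ⟨j, V, hV, hxV⟩ := h𝒲.exists_mem x hx
        exact ⟨j, .inl ⟨V, hV, hxV⟩⟩
      · obtain ⟨j, V, hV, hxV⟩ := h𝒜.exists_mem x hx
        exact ⟨j, .inr ⟨V, hV, hxV⟩⟩
    obtain ⟨j, hj⟩ := hj
    obtain ⟨V, hV, hxV⟩ := sUnion_union_subset_sUnion_absorb hj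
    exact ⟨j, V, hV, hxV⟩

lemma UnifAsdimLE.exists_isColoredCover_diff {𝒮 : Set (Set X)} {n : ℕ} {r : ℝ} {Y : Set X}
    (h : UnifAsdimLE (fun x y => dist x y) 𝒮 n) (hr : 0 < r)
    (hsep : ∀ s ∈ 𝒮, ∀ s' ∈ 𝒮, s ≠ s' → ∀ x ∈ s \ Y, ∀ y ∈ s' \ Y, r ≤ dist x y) :
    ∃ R : ℕ, ∃ 𝒜 : Fin (n + 1) → Set (Set X), IsColoredCover r R (⋃₀ 𝒮 \ Y) 𝒜 := by
  obtain ⟨R, hR⟩ := h r hr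
  choose! 𝒱 h𝒱 hdisj hcov using hR
  refine ⟨R, fun j => ⋃ s ∈ 𝒮, (· \ Y) '' 𝒱 s j, ⟨fun j => ?_, fun j => ?_, ?_⟩⟩
  · intro A hA A' hA' hne x hx y hy
    obtain ⟨s, hs, V, hV, rfl⟩ := mem_iUnion₂.1 hA
    obtain ⟨s', hs', V', hV', rfl⟩ := mem_iUnion₂.1 hA'
    by_cases hss' : s = s'
    · subst hss'
      exact hdisj s hs j V hV V' hV' (by rintro rfl; exact hne rfl) x hx.1 y hy.1
    · exact hsep s hs s' hs' hss' x ⟨(h𝒱 s hs j V hV).1 hx.1, hx.2⟩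
        y ⟨(h𝒱 s' hs' j V' hV').1 hy.1, hy.2⟩
  · intro A hA x hx y hy
    obtain ⟨s, hs, V, hV, rfl⟩ := mem_iUnion₂.1 hA
    exact (h𝒱 s hs j V hV).2 x hx.1 y hy.1
  · rintro x ⟨⟨s, hs, hxs⟩, hxY⟩
    obtain ⟨j, V, hV, hxV⟩ := hcov s hs x hxs
    exact ⟨j, V \ Y, mem_iUnion₂.2 ⟨s, hs, V, hV, rfl⟩, hxV, hxY⟩

end PseudoMetric

/-- **Infinite Union Theorem.** Let `X = ⋃ᵢ Xᵢ` with `asdim(Xᵢ) ≤ n` uniformly, and suppose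
that for every `r > 0` there is `Yᵣ ⊆ X` with `asdim(Yᵣ) ≤ n` such that
`d(Xᵢ ∖ Yᵣ, Xⱼ ∖ Yᵣ) ≥ r` whenever `Xᵢ ≠ Xⱼ`. Then `asdim(X) ≤ n`. -/
theorem asdim_le_of_infinite_union {X : Type*} [MetricSpace X] (n : ℕ)
    {ι : Type*} (Xi : ι → Set X)
    (hcover : (⋃ i, Xi i) = Set.univ)
    (hunif : UnifAsdimLE (fun x y : X => dist x y) (Set.range Xi) n)
    (hY : ∀ r > (0 : ℝ), ∃ Y : Set X,
      asdim (fun a b : Y => dist (a : X) (b : X)) ≤ (n : ℕ∞) ∧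
      ∀ i j : ι, Xi i ≠ Xi j →
        ∀ x ∈ Xi i \ Y, ∀ y ∈ Xi j \ Y, r ≤ dist x y) :
    asdim (fun x y : X => dist x y) ≤ (n : ℕ∞) := by
  rw [asdim_le_iff, asdimLE_iff_forall_isColoredCover]
  intro r hr
  obtain ⟨Y, hYdim, hYsep⟩ := hY r hr
  obtain ⟨R, 𝒜, h𝒜⟩ := hunif.exists_isColoredCover_diff hr (Y := Y) <| by
    rintro _ ⟨i, rfl⟩ _ ⟨j, rfl⟩ hij
    exact hYsep i j hij
  obtain ⟨𝒲, M, h𝒲⟩ := (asdim_le_iff.1 hYdim).exists_isColoredCover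
    (by positivity : 0 < 3 * r + 2 * (R : ℝ))
  refine ⟨_, _, ((h𝒲.image isometry_subtype_coe).absorb h𝒜 (by positivity) le_rfl).mono ?_⟩
  rw [image_univ, Subtype.range_coe, sUnion_range, hcover]
  simp
end
end
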